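/- arXiv:2407.02369 — 2 statements merged into one kernel-verified Lean document; each statement's English description precedes it below -/
import Mathlib

section
/- The Q-Bellman operator H is a contraction with respect to the maximum norm with contraction factor β; that is, for all Q, Q' : S × A → ℝ, it holds that max_{(i,a)} |(HQ)(i,a) − (HQ')(i,a)| ≤ β · max_{(i,a)} |Q(i,a) − Q'(i,a)|. -/
open Finset Real

variable {S A : Type*}

/-- Maximum norm `‖Q‖ = max_{(i,a)} |Q(i,a)|`. -/
noncomputable def maxNorm [Fintype S] [Fintype A] [Nonempty S] [Nonempty A]
    (Q : S × A → ℝ) : ℝ :=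
  Finset.univ.sup' Finset.univ_nonempty fun x => |Q x|

/-- Q-Bellman operator `(HQ)(i,a) = c(i,a) + β ∑_j p(j|i,a) max_b Q(j,b)`. -/
noncomputable def bellmanH [Fintype S] [Fintype A] [Nonempty A]
    (p c : S → A → S → ℝ) (β : ℝ) (Q : S × A → ℝ) : S × A → ℝ :=
  fun x => (∑ j, p x.1 x.2 j * c x.1 x.2 j) +
    β * ∑ j, p x.1 x.2 j * (Finset.univ.sup' Finset.univ_nonempty fun b => Q (j, b))

/-! The Bellman operator only sees `Q` through the state values `max_b Q(j,b)`, and this maximum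
is 1-Lipschitz in the maximum norm; averaging over `p(·|i,a)` does not increase the bound, and the
reward term cancels in `HQ - HQ'`, leaving the factor `β`. -/

theorem Finset.sup'_le_sup'_add_sup'_abs_sub {ι α : Type*} [AddCommGroup α] [LinearOrder α]
    [IsOrderedAddMonoid α] (s : Finset ι) (hs : s.Nonempty) (f g : ι → α) :
    s.sup' hs f ≤ s.sup' hs g + s.sup' hs (fun b => |f b - g b|) :=
  Finset.sup'_le _ _ fun b hb =>
    calc f b = g b + (f b - g b) := (add_sub_cancel _ _).symm
      _ ≤ s.sup' hs g + s.sup' hs (fun b => |f b - g b|) :=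
        add_le_add (Finset.le_sup' g hb)
          ((le_abs_self _).trans (Finset.le_sup' (fun b => |f b - g b|) hb))

theorem Finset.abs_sup'_sub_sup'_le {ι α : Type*} [AddCommGroup α] [LinearOrder α]
    [IsOrderedAddMonoid α] (s : Finset ι) (hs : s.Nonempty) (f g : ι → α) :
    |s.sup' hs f - s.sup' hs g| ≤ s.sup' hs (fun b => |f b - g b|) := by
  have hfg := s.sup'_le_sup'_add_sup'_abs_sub hs f g
  have hgf := s.sup'_le_sup'_add_sup'_abs_sub hs g f
  simp only [abs_sub_comm (g _)] at hgf
  exact abs_sub_le_iff.2 ⟨sub_le_iff_le_add'.2 hfg, sub_le_iff_le_add'.2 hgf⟩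

theorem Finset.abs_sum_mul_le_of_sum_eq_one {ι : Type*} (s : Finset ι) {w f : ι → ℝ} {M : ℝ}
    (hw0 : ∀ j ∈ s, 0 ≤ w j) (hw1 : ∑ j ∈ s, w j = 1) (hf : ∀ j ∈ s, |f j| ≤ M) :
    |∑ j ∈ s, w j * f j| ≤ M :=
  calc |∑ j ∈ s, w j * f j| ≤ ∑ j ∈ s, |w j * f j| := Finset.abs_sum_le_sum_abs _ _
    _ ≤ ∑ j ∈ s, w j * M := Finset.sum_le_sum fun j hj => by
        rw [abs_mul, abs_of_nonneg (hw0 j hj)]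
        exact mul_le_mul_of_nonneg_left (hf j hj) (hw0 j hj)
    _ = M := by rw [← Finset.sum_mul, hw1, one_mul]

section Bellman

variable [Fintype S] [Fintype A] [Nonempty A]

noncomputable def stateValue (Q : S × A → ℝ) (j : S) : ℝ :=
  Finset.univ.sup' Finset.univ_nonempty fun b => Q (j, b)

theorem abs_stateValue_sub_le_maxNorm [Nonempty S] (Q Q' : S × A → ℝ) (j : S) :
    |stateValue Q j - stateValue Q' j| ≤ maxNorm (fun x => Q x - Q' x) :=
  (Finset.univ.abs_sup'_sub_sup'_le _ _ _).trans <| Finset.sup'_le _ _ fun b _ =>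
    Finset.le_sup' (fun x => |Q x - Q' x|) (Finset.mem_univ (j, b))

theorem bellmanH_sub (p c : S → A → S → ℝ) (β : ℝ) (Q Q' : S × A → ℝ) (x : S × A) :
    bellmanH p c β Q x - bellmanH p c β Q' x =
      β * ∑ j, p x.1 x.2 j * (stateValue Q j - stateValue Q' j) := by
  simp only [bellmanH, stateValue, mul_sub, Finset.sum_sub_distrib]
  ring

end Bellman

theorem bellmanH_contraction_general [Fintype S] [Fintype A] [Nonempty S] [Nonempty A]
    (p c : S → A → S → ℝ)
    (hp0 : ∀ i a j, 0 ≤ p i a j) (hp1 : ∀ i a, ∑ j, p i a j = 1)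
    (β : ℝ) (hβ0 : 0 ≤ β) (Q Q' : S × A → ℝ) :
    maxNorm (fun x => bellmanH p c β Q x - bellmanH p c β Q' x) ≤
      β * maxNorm (fun x => Q x - Q' x) := by
  refine Finset.sup'_le _ _ fun x _ => ?_
  beta_reduce
  rw [bellmanH_sub, abs_mul, abs_of_nonneg hβ0]
  exact mul_le_mul_of_nonneg_left
    (Finset.univ.abs_sum_mul_le_of_sum_eq_one (fun j _ => hp0 _ _ j) (hp1 _ _)
      fun j _ => abs_stateValue_sub_le_maxNorm Q Q' j) hβ0

/-- The Q-Bellman operator is a `β`-contraction in the maximum norm. -/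
theorem bellmanH_contraction [Fintype S] [Fintype A] [Nonempty S] [Nonempty A]
    (p c : S → A → S → ℝ)
    (hp0 : ∀ i a j, 0 ≤ p i a j) (hp1 : ∀ i a, ∑ j, p i a j = 1)
    (β : ℝ) (hβ0 : 0 ≤ β) (hβ1 : β < 1) (Q Q' : S × A → ℝ) :
    maxNorm (fun x => bellmanH p c β Q x - bellmanH p c β Q' x) ≤
      β * maxNorm (fun x => Q x - Q' x) :=
  bellmanH_contraction_general p c hp0 hp1 β hβ0 Q Q'
end

section
/- The smooth Q-Bellman operator U is a contraction with respect to the maximum norm with contraction factor β; that is, for all Q, Q' : S × A → ℝ, it holds that max_{(i,a)} |(UQ)(i,a) − (UQ')(i,a)| ≤ β · max_{(i,a)} |Q(i,a) − Q'(i,a)|. -/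
/-!
For `N > 0` the log-sum-exp `(1/N) log ∑_b e^{N f(b)}` is monotone in `f` and commutes with
adding constants, hence is `1`-Lipschitz for the maximum norm; `N < 0` reduces to this through
`f ↦ -f`, and at `N = 0` it is the constant `0` because `1 / 0 = 0`. The operator `U` applies it
at every next state, averages with the probability weights `p(·|i,a)` and scales by `β ≥ 0`.
-/

open Finset Real

variable {S A : Type*}

/-- Smooth Q-Bellman operator
`(UQ)(i,a) = c(i,a) + β ∑_j p(j|i,a) (1/N) log ∑_b e^{N Q(j,b)}`. -/
noncomputable def smoothBellmanU [Fintype S] [Fintype A] [Nonempty A]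
    (p c : S → A → S → ℝ) (β N : ℝ) (Q : S × A → ℝ) : S × A → ℝ :=
  fun x => (∑ j, p x.1 x.2 j * c x.1 x.2 j) +
    β * ∑ j, p x.1 x.2 j * ((1 / N) * Real.log (∑ b, Real.exp (N * Q (j, b))))

section SmoothMax

variable [Fintype A]

noncomputable def smoothMax (N : ℝ) (f : A → ℝ) : ℝ :=
  1 / N * log (∑ b, exp (N * f b))

theorem smoothMax_zero_left (f : A → ℝ) : smoothMax 0 f = 0 := by
  simp [smoothMax]

theorem smoothMax_eq_neg_smoothMax_neg (N : ℝ) (f : A → ℝ) :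
    smoothMax N f = -smoothMax (-N) (-f) := by
  simp only [smoothMax, Pi.neg_apply, mul_neg, neg_mul, neg_neg, one_div, inv_neg]

variable [Nonempty A]

theorem smoothMax_add_const {N : ℝ} (hN : N ≠ 0) (f : A → ℝ) (M : ℝ) :
    smoothMax N (fun b => f b + M) = smoothMax N f + M := by
  have hsum : ∑ b, exp (N * (f b + M)) = exp (N * M) * ∑ b, exp (N * f b) := by
    rw [mul_sum]
    exact sum_congr rfl fun b _ => by rw [← exp_add, mul_add, add_comm]
  have hpos : 0 < ∑ b, exp (N * f b) := sum_pos (fun b _ => exp_pos _) univ_nonempty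
  rw [smoothMax, smoothMax, hsum, log_mul (exp_ne_zero _) hpos.ne', log_exp]
  field_simp
  ring

theorem smoothMax_mono {N : ℝ} (hN : 0 < N) {f g : A → ℝ} (hfg : f ≤ g) :
    smoothMax N f ≤ smoothMax N g := by
  unfold smoothMax
  gcongr with b
  exact hfg b

theorem abs_smoothMax_sub_le_of_pos {N : ℝ} (hN : 0 < N) {f g : A → ℝ} {M : ℝ}
    (h : ∀ b, |f b - g b| ≤ M) : |smoothMax N f - smoothMax N g| ≤ M := by
  have shifted_le (u v : A → ℝ) (huv : ∀ b, u b ≤ v b + M) :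
      smoothMax N u ≤ smoothMax N v + M :=
    (smoothMax_mono hN (g := fun b => v b + M) huv).trans_eq (smoothMax_add_const hN.ne' v M)
  rw [abs_sub_le_iff, sub_le_iff_le_add', sub_le_iff_le_add']
  exact ⟨shifted_le f g fun b => by linarith [(abs_le.1 (h b)).2],
    shifted_le g f fun b => by linarith [(abs_le.1 (h b)).1]⟩

theorem abs_smoothMax_sub_le (N : ℝ) {f g : A → ℝ} {M : ℝ} (h : ∀ b, |f b - g b| ≤ M) :
    |smoothMax N f - smoothMax N g| ≤ M := by
  rcases lt_trichotomy N 0 with hN | rfl | hN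
  · rw [smoothMax_eq_neg_smoothMax_neg N f, smoothMax_eq_neg_smoothMax_neg N g, neg_sub_neg,
      abs_sub_comm]
    refine abs_smoothMax_sub_le_of_pos (neg_pos.2 hN) fun b => ?_
    simpa only [Pi.neg_apply, neg_sub_neg, abs_sub_comm] using h b
  · simpa only [smoothMax_zero_left, sub_zero, abs_zero] using
      (abs_nonneg _).trans (h (Classical.arbitrary A))
  · exact abs_smoothMax_sub_le_of_pos hN h

end SmoothMax

theorem abs_sum_mul_le_of_abs_le {ι : Type*} {s : Finset ι} {w v : ι → ℝ}
    (hw0 : ∀ j, 0 ≤ w j) (hw1 : ∑ j ∈ s, w j = 1) {M : ℝ} (hv : ∀ j, |v j| ≤ M) :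
    |∑ j ∈ s, w j * v j| ≤ M :=
  calc |∑ j ∈ s, w j * v j|
      ≤ ∑ j ∈ s, w j * |v j| := by
        refine (abs_sum_le_sum_abs _ _).trans_eq (sum_congr rfl fun j _ => ?_)
        rw [abs_mul, abs_of_nonneg (hw0 j)]
    _ ≤ ∑ j ∈ s, w j * M := sum_le_sum fun j _ => mul_le_mul_of_nonneg_left (hv j) (hw0 j)
    _ = M := by rw [← sum_mul, hw1, one_mul]

section MaxNorm

variable [Fintype S] [Fintype A] [Nonempty S] [Nonempty A]

theorem abs_le_maxNorm (Q : S × A → ℝ) (x : S × A) : |Q x| ≤ maxNorm Q :=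
  le_sup' (fun x => |Q x|) (mem_univ x)

theorem maxNorm_le_iff {Q : S × A → ℝ} {C : ℝ} : maxNorm Q ≤ C ↔ ∀ x, |Q x| ≤ C := by
  simp only [maxNorm, sup'_le_iff, mem_univ, true_implies]

end MaxNorm

theorem smoothBellmanU_sub_apply [Fintype S] [Fintype A] [Nonempty A] (p c : S → A → S → ℝ)
    (β N : ℝ) (Q Q' : S × A → ℝ) (x : S × A) :
    smoothBellmanU p c β N Q x - smoothBellmanU p c β N Q' x =
      β * ∑ j, p x.1 x.2 j *
        (smoothMax N (fun b => Q (j, b)) - smoothMax N (fun b => Q' (j, b))) := by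
  simp only [smoothBellmanU, smoothMax, mul_sub, sum_sub_distrib]
  ring

theorem smoothBellmanU_contraction_general [Fintype S] [Fintype A] [Nonempty S] [Nonempty A]
    (p c : S → A → S → ℝ)
    (hp0 : ∀ i a j, 0 ≤ p i a j) (hp1 : ∀ i a, ∑ j, p i a j = 1)
    (β : ℝ) (hβ0 : 0 ≤ β)
    (N : ℝ) (Q Q' : S × A → ℝ) :
    maxNorm (fun x => smoothBellmanU p c β N Q x - smoothBellmanU p c β N Q' x) ≤
      β * maxNorm (fun x => Q x - Q' x) := by
  refine maxNorm_le_iff.2 fun x => ?_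
  have hnext : ∀ j, |smoothMax N (fun b => Q (j, b)) - smoothMax N (fun b => Q' (j, b))| ≤
      maxNorm (fun x => Q x - Q' x) :=
    fun j => abs_smoothMax_sub_le N fun b => abs_le_maxNorm (fun x => Q x - Q' x) (j, b)
  rw [smoothBellmanU_sub_apply, abs_mul, abs_of_nonneg hβ0]
  exact mul_le_mul_of_nonneg_left (abs_sum_mul_le_of_abs_le (hp0 x.1 x.2) (hp1 x.1 x.2) hnext) hβ0

/-- The smooth Q-Bellman operator is a `β`-contraction in the maximum norm. -/
theorem smoothBellmanU_contraction [Fintype S] [Fintype A] [Nonempty S] [Nonempty A]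
    (p c : S → A → S → ℝ)
    (hp0 : ∀ i a j, 0 ≤ p i a j) (hp1 : ∀ i a, ∑ j, p i a j = 1)
    (β : ℝ) (hβ0 : 0 ≤ β) (hβ1 : β < 1)
    (N : ℝ) (hN : 0 < N) (Q Q' : S × A → ℝ) :
    maxNorm (fun x => smoothBellmanU p c β N Q x - smoothBellmanU p c β N Q' x) ≤
      β * maxNorm (fun x => Q x - Q' x) :=
  smoothBellmanU_contraction_general p c hp0 hp1 β hβ0 N Q Q'
end
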